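/- arXiv:2510.25060 — 2 statements merged into one kernel-verified Lean document; each statement's English description precedes it below -/
import Mathlib

section
/- Define the linear operator L_α on k×k real matrices by L_α(U) = U(aJ + bI) + c(Uᵀ + tr(U)I − 2Diag(U)), with a = 1/2 − α/4, b = α/4, c = α/(2π), J the all-ones matrix, and Diag(U) the diagonal part of U. Then every skew-symmetric matrix U with U𝟙 = 0 (where 𝟙 is the all-ones vector) is an eigenvector of L_α with eigenvalue b − c = α/4 − α/(2π). -/
open Matrix

/-- The all-ones k×k matrix J = 𝟙𝟙ᵀ. -/
def matJ (k : ℕ) : Matrix (Fin k) (Fin k) ℝ := Matrix.of fun _ _ => 1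

/-- The operator L_α(U) = U(aJ + bI) + c(Uᵀ + tr(U)I − 2Diag(U)), with
a = 1/2 − α/4, b = α/4, c = α/(2π). -/
noncomputable def Lalpha (k : ℕ) (α : ℝ) (U : Matrix (Fin k) (Fin k) ℝ) :
    Matrix (Fin k) (Fin k) ℝ :=
  U * ((1 / 2 - α / 4) • matJ k + (α / 4) • (1 : Matrix (Fin k) (Fin k) ℝ)) +
    (α / (2 * Real.pi)) • (Uᵀ + U.trace • (1 : Matrix (Fin k) (Fin k) ℝ) -
      2 • Matrix.diagonal (fun i => U i i))

/-- every skew-symmetric U with U𝟙 = 0 is an eigenvector of L_α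
with eigenvalue b − c = α/4 − α/(2π). -/
theorem Lalpha_skew_eigen (k : ℕ) (α : ℝ) (U : Matrix (Fin k) (Fin k) ℝ)
    (hskew : Uᵀ = -U) (hrow : U.mulVec (fun _ => 1) = 0) :
    Lalpha k α U = (α / 4 - α / (2 * Real.pi)) • U := by
  have hdiag : ∀ i, U i i = 0 := by
    intro i
    have := congrFun (congrFun hskew i) i
    simp [Matrix.transpose_apply] at this
    linarith
  have htr : U.trace = 0 := by
    simp [Matrix.trace, Matrix.diag, hdiag]
  have hJ : U * matJ k = 0 := by
    ext i j
    have := congrFun hrow i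
    simpa [Matrix.mul_apply, matJ, Matrix.mulVec, dotProduct] using this
  have hdiagm : Matrix.diagonal (fun i => U i i) = 0 := by
    ext i j
    by_cases h : i = j <;> simp [Matrix.diagonal, h, hdiag]
  simp only [Lalpha, Matrix.mul_add, Matrix.mul_smul, hJ, smul_zero, zero_add,
    Matrix.mul_one, htr, zero_smul, add_zero, hskew, hdiagm, smul_neg, sub_smul]
  simp [Matrix.mul_sub, Matrix.mul_smul, hJ]
  abel
end

section
/- With L_α as above, every symmetric matrix U satisfying U𝟙 = 0 and having zero diagonal (Diag(U) = 0) is an eigenvector of L_α with eigenvalue b + c = α/4 + α/(2π). -/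
open Matrix

/-- every symmetric U with U𝟙 = 0 and zero diagonal is an
eigenvector of L_α with eigenvalue b + c = α/4 + α/(2π). -/
theorem Lalpha_sym_eigen (k : ℕ) (α : ℝ) (U : Matrix (Fin k) (Fin k) ℝ)
    (hsym : Uᵀ = U) (hdiag : ∀ i, U i i = 0) (hrow : U.mulVec (fun _ => 1) = 0) :
    Lalpha k α U = (α / 4 + α / (2 * Real.pi)) • U := by
  have hJ : U * matJ k = 0 := by
    ext i j
    have := congrFun hrow i
    simpa [matJ, Matrix.mul_apply, Matrix.mulVec, dotProduct] using this
  have htr : U.trace = 0 := by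
    simp [Matrix.trace, Matrix.diag, hdiag]
  have hD : Matrix.diagonal (fun i => U i i) = 0 := by
    ext i j
    by_cases h : i = j <;> simp [Matrix.diagonal, h, hdiag]
  rw [Lalpha, mul_add, Matrix.mul_smul, hJ, hsym, htr, hD]
  ext i j
  simp [Matrix.mul_one, add_smul]
  ring
end
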